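/- Let A and B be Archimedean f-algebras with unit elements e_A and e_B respectively (and point separating order duals), let T : A → B be a Markov operator, and let c ∈ A satisfy 0 ≤ c ≤ e_A. Define T_c : A → B by T_c(b) = T(cb) − T(c)T(b). Then both T + T_c and T − T_c are Markov operators from A to B. Consequently, if T is an extreme point of the convex set of Markov operators, then T(cb) = T(c)T(b) for all b ∈ A and all c with 0 ≤ c ≤ e_A. -/

import Mathlib

/-!
With `D = T ∘ (c * ·) - (T c * ·) ∘ T` one has, for `a ≥ 0`,
`(T + D) a = T (c * a) + (1 - T c) * T a` and `(T - D) a = T c * T a + T ((1 - c) * a)`,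
sums of products of positive elements, while `D 1 = 0`. So `T ± D` are Markov, and `T` is their
midpoint; if `T` is extreme this forces `D = 0`.
-/

theorem eq_zero_of_add_mem_of_sub_mem_extremePoints {𝕜 E : Type*} [Field 𝕜] [LinearOrder 𝕜]
    [IsStrictOrderedRing 𝕜] [AddCommGroup E] [Module 𝕜 E] {s : Set E} {x d : E}
    (hx : x ∈ s.extremePoints 𝕜) (hadd : x + d ∈ s) (hsub : x - d ∈ s) : d = 0 := by
  have hmid : x ∈ openSegment 𝕜 (x + d) (x - d) :=
    ⟨1 / 2, 1 / 2, by norm_num, by norm_num, by norm_num, by module⟩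
  simpa using hx.2 hadd hsub hmid

section Markov

variable {A B : Type*}

def markovOperators (A B : Type*) [Semiring A] [PartialOrder A] [Algebra ℝ A]
    [Semiring B] [PartialOrder B] [Algebra ℝ B] : Set (A →ₗ[ℝ] B) :=
  {S | (∀ a : A, 0 ≤ a → 0 ≤ S a) ∧ S 1 = 1}

variable [Ring A] [Algebra ℝ A] [Ring B] [Algebra ℝ B]

/-- The operator `T_c` of the statement. -/
def mulDefect (T : A →ₗ[ℝ] B) (c : A) : A →ₗ[ℝ] B :=
  T ∘ₗ LinearMap.mulLeft ℝ c - LinearMap.mulLeft ℝ (T c) ∘ₗ T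

theorem mulDefect_apply (T : A →ₗ[ℝ] B) (c b : A) :
    mulDefect T c b = T (c * b) - T c * T b := rfl

theorem mulDefect_one {T : A →ₗ[ℝ] B} (hT1 : T 1 = 1) (c : A) : mulDefect T c 1 = 0 := by
  rw [mulDefect_apply, mul_one, hT1, mul_one, sub_self]

variable [PartialOrder A] [AddLeftMono A] [PartialOrder B] [AddLeftMono B]
  (hmulA : ∀ x y : A, 0 ≤ x → 0 ≤ y → 0 ≤ x * y)
  (hmulB : ∀ x y : B, 0 ≤ x → 0 ≤ y → 0 ≤ x * y)
  {T : A →ₗ[ℝ] B} (hTpos : ∀ a : A, 0 ≤ a → 0 ≤ T a) (hT1 : T 1 = 1)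
  {c : A} (hc0 : 0 ≤ c) (hc1 : c ≤ 1)
include hmulA hmulB hTpos hT1 hc0 hc1

theorem add_mulDefect_mem_markovOperators : T + mulDefect T c ∈ markovOperators A B := by
  refine ⟨fun a ha => ?_, by rw [LinearMap.add_apply, mulDefect_one hT1, hT1, add_zero]⟩
  have h1c : 0 ≤ 1 - T c := by
    simpa [hT1] using hTpos (1 - c) (sub_nonneg.mpr hc1)
  have hsplit : (T + mulDefect T c) a = T (c * a) + (1 - T c) * T a := by
    rw [LinearMap.add_apply, mulDefect_apply]; noncomm_ring
  rw [hsplit]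
  exact add_nonneg (hTpos _ (hmulA _ _ hc0 ha)) (hmulB _ _ h1c (hTpos a ha))

theorem sub_mulDefect_mem_markovOperators : T - mulDefect T c ∈ markovOperators A B := by
  refine ⟨fun a ha => ?_, by rw [LinearMap.sub_apply, mulDefect_one hT1, hT1, sub_zero]⟩
  have hsplit : (T - mulDefect T c) a = T c * T a + T ((1 - c) * a) := by
    rw [LinearMap.sub_apply, mulDefect_apply, sub_mul, one_mul, map_sub]; abel
  rw [hsplit]
  exact add_nonneg (hmulB _ _ (hTpos c hc0) (hTpos a ha))
    (hTpos _ (hmulA _ _ (sub_nonneg.mpr hc1) ha))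

theorem map_mul_of_mem_extremePoints_markovOperators
    (hT : T ∈ (markovOperators A B).extremePoints ℝ) (b : A) :
    T (c * b) = T c * T b := by
  have hD : mulDefect T c = 0 := eq_zero_of_add_mem_of_sub_mem_extremePoints hT
    (add_mulDefect_mem_markovOperators hmulA hmulB hTpos hT1 hc0 hc1)
    (sub_mulDefect_mem_markovOperators hmulA hmulB hTpos hT1 hc0 hc1)
  simpa [mulDefect_apply, sub_eq_zero] using LinearMap.congr_fun hD b

end Markov

theorem stmt_12_general
    {A B : Type*}
    [Ring A] [Lattice A] [Algebra ℝ A] [CovariantClass A A (· + ·) (· ≤ ·)]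
    -- A is a lattice-ordered algebra
    (hmulA : ∀ x y : A, 0 ≤ x → 0 ≤ y → 0 ≤ x * y)
    [Ring B] [Lattice B] [Algebra ℝ B] [CovariantClass B B (· + ·) (· ≤ ·)]
    -- B is a lattice-ordered algebra
    (hmulB : ∀ x y : B, 0 ≤ x → 0 ≤ y → 0 ≤ x * y)
    (T : A →ₗ[ℝ] B)
    -- T is a Markov operator
    (hTpos : ∀ a : A, 0 ≤ a → 0 ≤ T a) (hT1 : T 1 = 1)
    (c : A) (hc0 : 0 ≤ c) (hc1 : c ≤ 1) :
    (T + (T ∘ₗ LinearMap.mulLeft ℝ c - LinearMap.mulLeft ℝ (T c) ∘ₗ T) ∈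
        {S : A →ₗ[ℝ] B | (∀ a : A, 0 ≤ a → 0 ≤ S a) ∧ S 1 = 1} ∧
     T - (T ∘ₗ LinearMap.mulLeft ℝ c - LinearMap.mulLeft ℝ (T c) ∘ₗ T) ∈
        {S : A →ₗ[ℝ] B | (∀ a : A, 0 ≤ a → 0 ≤ S a) ∧ S 1 = 1}) ∧
    (T ∈ Set.extremePoints ℝ {S : A →ₗ[ℝ] B | (∀ a : A, 0 ≤ a → 0 ≤ S a) ∧ S 1 = 1} →
      ∀ c' : A, 0 ≤ c' → c' ≤ 1 → ∀ b : A, T (c' * b) = T c' * T b) :=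
  ⟨⟨add_mulDefect_mem_markovOperators hmulA hmulB hTpos hT1 hc0 hc1,
      sub_mulDefect_mem_markovOperators hmulA hmulB hTpos hT1 hc0 hc1⟩,
    fun hT _ hc'0 hc'1 => map_mul_of_mem_extremePoints_markovOperators hmulA hmulB hTpos hT1
      hc'0 hc'1 hT⟩

/-- Let `T` be a Markov operator between unital Archimedean `f`-algebras with
point separating order duals and let `0 ≤ c ≤ 1`. With
`T_c b = T (c * b) - T c * T b`, both `T + T_c` and `T - T_c` are Markov
operators; consequently, if `T` is an extreme point of the set of Markov
operators then `T (c * b) = T c * T b` for all `b` and all `0 ≤ c ≤ 1`. -/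
theorem stmt_12
    {A B : Type*}
    [Ring A] [Lattice A] [Algebra ℝ A] [CovariantClass A A (· + ·) (· ≤ ·)]
    -- A is a Riesz space (vector lattice) over ℝ
    (hsmulA : ∀ (r : ℝ) (x : A), 0 ≤ r → 0 ≤ x → 0 ≤ r • x)
    -- A is a lattice-ordered algebra
    (hmulA : ∀ x y : A, 0 ≤ x → 0 ≤ y → 0 ≤ x * y)
    -- the f-algebra condition
    (hfA : ∀ x y z : A, 0 ≤ z → x ⊓ y = 0 → (x * z) ⊓ y = 0 ∧ (z * x) ⊓ y = 0)
    -- A is Archimedean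
    (harchA : ∀ x y : A, (∀ n : ℕ, n • x ≤ y) → x ≤ 0)
    -- the order dual of A separates the points of A
    (hsepA : ∀ x : A, x ≠ 0 → ∃ f : A →ₗ[ℝ] ℝ, Monotone f ∧ f x ≠ 0)
    [Ring B] [Lattice B] [Algebra ℝ B] [CovariantClass B B (· + ·) (· ≤ ·)]
    -- B is a Riesz space (vector lattice) over ℝ
    (hsmulB : ∀ (r : ℝ) (x : B), 0 ≤ r → 0 ≤ x → 0 ≤ r • x)
    -- B is a lattice-ordered algebra
    (hmulB : ∀ x y : B, 0 ≤ x → 0 ≤ y → 0 ≤ x * y)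
    -- the f-algebra condition
    (hfB : ∀ x y z : B, 0 ≤ z → x ⊓ y = 0 → (x * z) ⊓ y = 0 ∧ (z * x) ⊓ y = 0)
    -- B is Archimedean
    (harchB : ∀ x y : B, (∀ n : ℕ, n • x ≤ y) → x ≤ 0)
    -- the order dual of B separates the points of B
    (hsepB : ∀ x : B, x ≠ 0 → ∃ f : B →ₗ[ℝ] ℝ, Monotone f ∧ f x ≠ 0)
    (T : A →ₗ[ℝ] B)
    -- T is a Markov operator
    (hTpos : ∀ a : A, 0 ≤ a → 0 ≤ T a) (hT1 : T 1 = 1)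
    (c : A) (hc0 : 0 ≤ c) (hc1 : c ≤ 1) :
    (T + (T ∘ₗ LinearMap.mulLeft ℝ c - LinearMap.mulLeft ℝ (T c) ∘ₗ T) ∈
        {S : A →ₗ[ℝ] B | (∀ a : A, 0 ≤ a → 0 ≤ S a) ∧ S 1 = 1} ∧
     T - (T ∘ₗ LinearMap.mulLeft ℝ c - LinearMap.mulLeft ℝ (T c) ∘ₗ T) ∈
        {S : A →ₗ[ℝ] B | (∀ a : A, 0 ≤ a → 0 ≤ S a) ∧ S 1 = 1}) ∧
    (T ∈ Set.extremePoints ℝ {S : A →ₗ[ℝ] B | (∀ a : A, 0 ≤ a → 0 ≤ S a) ∧ S 1 = 1} →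
      ∀ c' : A, 0 ≤ c' → c' ≤ 1 → ∀ b : A, T (c' * b) = T c' * T b) :=
  stmt_12_general hmulA hmulB T hTpos hT1 c hc0 hc1
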